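/- Let P ⊆ ℝⁿ be a Delone set of finite local complexity. There exists ε with 0 < ε < 1 such that the following holds: if φ, ψ : ℝⁿ → ℝⁿ are differentiable functions whose derivative maps dφ and dψ are strongly P-equivariant, if sup_{x ∈ ℝⁿ} ‖Dφ(x) − I‖ < ε, and if φ − ψ is strongly P-equivariant, then φ is a bijection of ℝⁿ, the function (ψ − φ) ∘ φ⁻¹ is strongly φ(P)-equivariant, and ψ(P) is locally derivable from φ(P). -/

import Mathlib

open Metric Set

noncomputable section

/-- Euclidean space ℝⁿ. -/
abbrev Euc (n : ℕ) := EuclideanSpace ℝ (Fin n)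

/-- The translate `P - x = {p - x : p ∈ P}`. -/
def shiftSet {n : ℕ} (P : Set (Euc n)) (x : Euc n) : Set (Euc n) :=
  (fun p => p - x) '' P

/-- The `r`-patch of `P` around `x`: `B_r[P - x] = B(0,r) ∩ (P - x)`. -/
def patch {n : ℕ} (P : Set (Euc n)) (r : ℝ) (x : Euc n) : Set (Euc n) :=
  ball (0 : Euc n) r ∩ shiftSet P x

/-- `P` is uniformly discrete: there is a positive minimal distance between points. -/
def UnifDiscrete {n : ℕ} (P : Set (Euc n)) : Prop :=
  ∃ δ > 0, ∀ p ∈ P, ∀ q ∈ P, p ≠ q → δ ≤ ‖p - q‖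

/-- `P` is relatively dense: every ball of radius `R` contains a point of `P`. -/
def RelDense {n : ℕ} (P : Set (Euc n)) : Prop :=
  ∃ R > 0, ∀ x : Euc n, ∃ p ∈ P, ‖p - x‖ < R

/-- `P` has finite local complexity: for each `r > 0`, only finitely many `r`-patches
around points of `P`. -/
def FLC {n : ℕ} (P : Set (Euc n)) : Prop :=
  ∀ r > 0, {s : Set (Euc n) | ∃ x ∈ P, s = patch P r x}.Finite

/-- `f` is `P`-equivariant with range `R`. -/
def EquivRange {n : ℕ} {F : Type*} (P : Set (Euc n)) (R : ℝ) (f : Euc n → F) : Prop :=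
  ∀ x y : Euc n, patch P R x = patch P R y → f x = f y

/-- `f` is strongly `P`-equivariant: `P`-equivariant with some finite range `R > 0`. -/
def StrongEquiv {n : ℕ} {F : Type*} (P : Set (Euc n)) (f : Euc n → F) : Prop :=
  ∃ R > 0, EquivRange P R f

/-- `f`, viewed as a function on the subset `Q`, is `P`-equivariant with range `R`. -/
def EquivRangeOn {n : ℕ} {F : Type*} (P Q : Set (Euc n)) (R : ℝ) (f : Euc n → F) : Prop :=
  ∀ x ∈ Q, ∀ y ∈ Q, patch P R x = patch P R y → f x = f y

/-- `f`, viewed as a function on the subset `Q`, is strongly `P`-equivariant. -/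
def StrongEquivOn {n : ℕ} {F : Type*} (P Q : Set (Euc n)) (f : Euc n → F) : Prop :=
  ∃ R > 0, EquivRangeOn P Q R f

/-- `Q` is locally derivable from `P`. -/
def LocallyDerivable {n : ℕ} (P Q : Set (Euc n)) : Prop :=
  ∃ R > 0, ∀ x y : Euc n, patch P R x = patch P R y →
    ({0} : Set (Euc n)) ∩ shiftSet Q x = ({0} : Set (Euc n)) ∩ shiftSet Q y

/-- Hypothesis (H): for every `r > 0` there is `r' > 0` such that for all `x`,
`B(φ(x), r) ∩ φ(P) ⊆ φ(B(x, r') ∩ P)`. -/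
def HypoH {n : ℕ} (P : Set (Euc n)) (φ : Euc n → Euc n) : Prop :=
  ∀ r > 0, ∃ r' > 0, ∀ x : Euc n, ball (φ x) r ∩ (φ '' P) ⊆ φ '' (ball x r' ∩ P)

/-- The pattern metric `D` on closed subsets of ℝⁿ. -/
def patternDist {n : ℕ} (A B : Set (Euc n)) : ℝ :=
  sInf {ε : ℝ | 0 < ε ∧ Metric.hausdorffDist
    ((ball (0 : Euc n) (1 / ε) ∩ A) ∪ sphere (0 : Euc n) (1 / ε))
    ((ball (0 : Euc n) (1 / ε) ∩ B) ∪ sphere (0 : Euc n) (1 / ε)) ≤ ε}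

/-- A continuous `f : ℝⁿ → ℝⁿ` is weakly `P`-equivariant if it is uniformly approximated
by strongly `P`-equivariant continuous functions. -/
def WeakEquiv {n : ℕ} (P : Set (Euc n)) (f : Euc n → Euc n) : Prop :=
  ∀ ε > 0, ∃ g : Euc n → Euc n, Continuous g ∧ StrongEquiv P g ∧ ∀ x : Euc n, ‖f x - g x‖ < ε

/-- `P` is aperiodic: the only translation fixing `P` is `0`. -/
def IsAperiodicSet {n : ℕ} (P : Set (Euc n)) : Prop :=
  ∀ x : Euc n, shiftSet P x = P → x = 0



/-!
Since `‖Dφ - I‖ < ε`, the map `φ` is a bijective near-isometry. If the `φ(P)`-patches around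
`φ a` and `φ b` agree on a large ball, every `p ∈ P` near `a` has a partner `q ∈ P` with
`φ q - φ b = φ p - φ a`. For nearby `p₁, p₂`, the difference vectors `p₁ - p₂` and `q₁ - q₂`
are `ε`-close. By finite local complexity, the short difference vectors of `P` form a finite,
hence uniformly separated, set, so the two vectors coincide. A chain argument through the
relatively dense set `P` then makes `q - p` a single vector `c`. Hence `P` is locally
`c`-periodic near `a`, and equivariance of `dφ` forces `b = a + c`. So `φ(P)`-patches determine
`P`-patches, and the statements about `ψ` follow from the equivariance of `dψ` and `φ - ψ`.
-/

open scoped Pointwise NNReal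

section Patches

variable {n : ℕ} {P : Set (Euc n)} {R R' : ℝ} {x y z : Euc n}

lemma mem_shiftSet : z ∈ shiftSet P x ↔ z + x ∈ P := by
  simp [shiftSet, sub_eq_iff_eq_add]

lemma mem_patch : z ∈ patch P R x ↔ ‖z‖ < R ∧ z + x ∈ P := by
  rw [patch, mem_inter_iff, mem_ball_zero_iff, mem_shiftSet]

lemma patch_eq_patch_iff :
    patch P R x = patch P R y ↔ ∀ z : Euc n, ‖z‖ < R → (z + x ∈ P ↔ z + y ∈ P) := by
  simp only [Set.ext_iff, mem_patch]
  exact forall_congr' fun z => ⟨fun h hz => by simpa [hz] using h, fun h => by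
    by_cases hz : ‖z‖ < R <;> simp [hz, h]⟩

lemma add_mem_of_patch_eq (h : patch P R x = patch P R y) (hz : ‖z‖ < R) (hzx : z + x ∈ P) :
    z + y ∈ P :=
  (patch_eq_patch_iff.mp h z hz).mp hzx

lemma patch_eq_of_le (h : patch P R x = patch P R y) (hR : R' ≤ R) :
    patch P R' x = patch P R' y :=
  patch_eq_patch_iff.mpr fun z hz => patch_eq_patch_iff.mp h z (hz.trans_le hR)

lemma patch_add_eq_of_patch_eq (h : patch P R x = patch P R y) {w : Euc n}
    (hw : ‖w‖ + R' ≤ R) : patch P R' (x + w) = patch P R' (y + w) := by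
  refine patch_eq_patch_iff.mpr fun z hz => ?_
  rw [← add_assoc, ← add_assoc, add_right_comm z x, add_right_comm z y]
  exact patch_eq_patch_iff.mp h (z + w) ((norm_add_le z w).trans_lt (by linarith))

/-- Equal patches of radius `R + r` give equal derivatives of `f` on the balls of radius `r`. -/
lemma apply_add_sub_eq_of_patch_eq {f : Euc n → Euc n} {r : ℝ} (hf : Differentiable ℝ f)
    (hf' : EquivRange P R (fderiv ℝ f)) (h : patch P (R + r) x = patch P (R + r) y)
    (hz : ‖z‖ < r) : f (x + z) - f x = f (y + z) - f y := by
  have hderiv : ∀ w ∈ ball (0 : Euc n) r,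
      fderiv ℝ (fun w => f (x + w) - f x) w = fderiv ℝ (fun w => f (y + w) - f y) w := by
    intro w hw
    rw [fderiv_sub_const, fderiv_sub_const, fderiv_comp_add_left, fderiv_comp_add_left]
    exact hf' _ _ (patch_add_eq_of_patch_eq h (by rw [mem_ball_zero_iff] at hw; linarith))
  have hdiff : ∀ u : Euc n, Differentiable ℝ (fun w => f (u + w) - f u) := fun u =>
    (hf.comp (differentiable_const u |>.add differentiable_id)).sub_const _
  have := isOpen_ball.eqOn_of_fderiv_eq (convex_ball (0 : Euc n) r).isPreconnected
    (hdiff x).differentiableOn (hdiff y).differentiableOn hderiv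
    (mem_ball_self ((norm_nonneg z).trans_lt hz)) (by simp)
  simpa using this (mem_ball_zero_iff.mpr hz)

end Patches

section Finiteness

open Filter Topology

lemma Set.Finite.exists_pos_forall_eq_of_norm_sub_lt {E : Type*} [NormedAddCommGroup E]
    {T : Set E} (hT : T.Finite) : ∃ γ > 0, ∀ s ∈ T, ∀ t ∈ T, ‖s - t‖ < γ → s = t := by
  have hsmall : ∀ᶠ γ in 𝓝[>] (0 : ℝ), ∀ st ∈ T ×ˢ T, ‖st.1 - st.2‖ < γ → st.1 = st.2 := by
    refine (eventually_all_finite (hT.prod hT)).mpr fun st _ => ?_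
    by_cases h : st.1 = st.2
    · exact Eventually.of_forall fun _ _ => h
    · filter_upwards [nhdsWithin_le_nhds (eventually_lt_nhds
        (norm_pos_iff.mpr (sub_ne_zero.mpr h)))] with γ hγ hlt using absurd hlt (not_lt.mpr hγ.le)
  obtain ⟨γ, hγ, hγ0⟩ := (hsmall.and self_mem_nhdsWithin).exists
  exact ⟨γ, hγ0, fun s hs t ht => hγ (s, t) ⟨hs, ht⟩⟩

variable {n : ℕ} {P : Set (Euc n)}

lemma UnifDiscrete.finite_inter (hP : UnifDiscrete P) {K : Set (Euc n)}
    (hK : Bornology.IsBounded K) : (K ∩ P).Finite := by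
  obtain ⟨δ, hδ, hsep⟩ := hP
  have hsep' : P.Pairwise fun p q => δ ≤ dist p q := fun p hp q hq hpq => by
    simpa [dist_eq_norm] using hsep p hp q hq hpq
  have : DiscreteTopology P := DiscreteTopology.of_forall_le_dist hδ fun p q hpq => hsep' p.2 q.2
    (Subtype.coe_injective.ne hpq)
  exact Metric.finite_isBounded_inter_isClosed (isDiscrete_iff_discreteTopology.mpr this) hK
    (isClosed_of_pairwise_le_dist hδ hsep')

lemma FLC.finite_sub_inter_ball (hFLC : FLC P) (hUD : UnifDiscrete P) {r : ℝ} (hr : 0 < r) :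
    ((P - P) ∩ ball 0 r).Finite := by
  have hpatch : ∀ x : Euc n, (patch P r x).Finite := by
    intro x
    refine ((hUD.finite_inter (isBounded_ball (x := x) (r := r))).image (· - x)).subset ?_
    intro z hz
    rw [mem_patch] at hz
    exact ⟨z + x, ⟨by simpa [mem_ball, dist_eq_norm] using hz.1, hz.2⟩, by simp⟩
  refine ((hFLC r hr).sUnion (by rintro _ ⟨x, -, rfl⟩; exact hpatch x)).subset ?_
  rintro _ ⟨⟨p, hp, q, hq, rfl⟩, hpq⟩
  exact ⟨patch P r q, ⟨q, hq, rfl⟩, mem_patch.mpr ⟨mem_ball_zero_iff.mp hpq, by simpa using hp⟩⟩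

lemma EquivRange.finite_image {F : Type*} {R : ℝ} {f : Euc n → F} (hf : EquivRange P R f)
    (hFLC : FLC P) (hR : 0 < R) : (f '' P).Finite := by
  refine ((hFLC R hR).image fun s => f (Function.invFunOn (patch P R) P s)).subset ?_
  rintro _ ⟨p, hp, rfl⟩
  exact ⟨patch P R p, ⟨p, hp, rfl⟩, hf _ _ (Function.invFunOn_eq ⟨p, hp, rfl⟩)⟩

end Finiteness

section ApproximateIdentity

variable {E : Type*} [NormedAddCommGroup E] [NormedSpace ℝ E] {f : E → E} {c : ℝ≥0}

lemma approximatesLinearOn_id_of_norm_fderiv_sub_le (hf : Differentiable ℝ f)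
    (hc : ∀ x, ‖fderiv ℝ f x - ContinuousLinearMap.id ℝ E‖ ≤ c) :
    ApproximatesLinearOn f (ContinuousLinearMap.id ℝ E) univ c := fun x _ y _ =>
  convex_univ.norm_image_sub_le_of_norm_fderiv_le' (fun z _ => hf z) (fun z _ => hc z)
    (mem_univ y) (mem_univ x)

namespace ApproximatesLinearOn

lemma norm_image_sub_le_two_mul (hf : ApproximatesLinearOn f (ContinuousLinearMap.id ℝ E) univ c)
    (hc : c ≤ 1) (x y : E) : ‖f x - f y‖ ≤ 2 * ‖x - y‖ := by
  have happrox : ‖f x - f y - (x - y)‖ ≤ c * ‖x - y‖ := hf x trivial y trivial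
  have := norm_sub_norm_le (f x - f y) (x - y)
  nlinarith [mul_le_of_le_one_left (norm_nonneg (x - y)) (NNReal.coe_le_one.mpr hc)]

lemma norm_sub_le_two_mul_norm_image_sub
    (hf : ApproximatesLinearOn f (ContinuousLinearMap.id ℝ E) univ c) (hc : c ≤ 1 / 2) (x y : E) :
    ‖x - y‖ ≤ 2 * ‖f x - f y‖ := by
  have happrox : ‖f x - f y - (x - y)‖ ≤ c * ‖x - y‖ := hf x trivial y trivial
  have := norm_sub_norm_le (x - y) (f x - f y)
  rw [norm_sub_rev (x - y)] at this
  have hc' : (c : ℝ) ≤ 1 / 2 := by exact_mod_cast hc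
  nlinarith [mul_le_mul_of_nonneg_right hc' (norm_nonneg (x - y))]

lemma bijective [CompleteSpace E] (hf : ApproximatesLinearOn f (ContinuousLinearMap.id ℝ E) univ c)
    (hc : c < 1) : Function.Bijective f := by
  have hf' : ApproximatesLinearOn f ((ContinuousLinearEquiv.refl ℝ E : E ≃L[ℝ] E) : E →L[ℝ] E)
      univ c := by rwa [ContinuousLinearEquiv.coe_refl]
  have hN : Subsingleton E ∨ c < ‖((ContinuousLinearEquiv.refl ℝ E).symm : E →L[ℝ] E)‖₊⁻¹ := by
    rcases subsingleton_or_nontrivial E with h | h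
    · exact .inl h
    · exact .inr (by simpa using hc)
  exact ⟨injOn_univ.mp (hf'.injOn hN), hf'.surjective hN⟩

end ApproximatesLinearOn

end ApproximateIdentity

/-- Chain argument: consecutive points of `S` taken near a subdivision of the segment `[x, y]`
are less than `3 * ρ` apart. -/
lemma Convex.apply_eq_apply_of_dense {E α : Type*} [NormedAddCommGroup E] [NormedSpace ℝ E]
    {C S : Set E} (hC : Convex ℝ C) {ρ : ℝ} (hS : ∀ x ∈ C, ∃ s ∈ S, ‖s - x‖ < ρ) {f : E → α}
    (hf : ∀ s ∈ S, ∀ t ∈ S, ‖s - t‖ < 3 * ρ → f s = f t) {x y s t : E} (hx : x ∈ C) (hy : y ∈ C)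
    (hs : s ∈ S) (ht : t ∈ S) (hsx : ‖s - x‖ < ρ) (hty : ‖t - y‖ < ρ) : f s = f t := by
  have hρ : 0 < ρ := (norm_nonneg _).trans_lt hsx
  suffices key : ∀ k : ℕ, ∀ x ∈ C, ∀ y ∈ C, ‖x - y‖ ≤ k * ρ →
      ∀ s ∈ S, ∀ t ∈ S, ‖s - x‖ < ρ → ‖t - y‖ < ρ → f s = f t by
    obtain ⟨k, hk⟩ := exists_nat_ge (‖x - y‖ / ρ)
    exact key k x hx y hy ((div_le_iff₀ hρ).mp hk) s hs t ht hsx hty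
  intro k
  induction k with
  | zero =>
    intro x _ y _ hxy s hs t ht hsx hty
    obtain rfl : x = y := by simpa [sub_eq_zero] using hxy
    refine hf s hs t ht ?_
    calc ‖s - t‖ ≤ ‖s - x‖ + ‖x - t‖ := norm_sub_le_norm_sub_add_norm_sub s x t
      _ < 3 * ρ := by rw [norm_sub_rev x t]; linarith
  | succ k ih =>
    intro x hx y hy hxy s hs t ht hsx hty
    have hk : (0 : ℝ) < k + 1 := by positivity
    set z := x + ((k : ℝ) / (k + 1)) • (y - x)
    have hz : z ∈ C := hC.add_smul_sub_mem hx hy ⟨by positivity, (div_le_one hk).mpr (by linarith)⟩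
    have hxz : ‖x - z‖ ≤ k * ρ := by
      have : x - z = ((k : ℝ) / (k + 1)) • (x - y) := by simp only [z]; module
      rw [this, norm_smul, Real.norm_of_nonneg (by positivity), div_mul_eq_mul_div, div_le_iff₀ hk]
      push_cast at hxy
      nlinarith
    have hzy : ‖z - y‖ ≤ ρ := by
      have hcoef : 1 - (k : ℝ) / (k + 1) = 1 / (k + 1) := by field_simp; ring
      have : z - y = (1 - (k : ℝ) / (k + 1)) • (x - y) := by simp only [z]; module
      rw [this, hcoef, norm_smul, Real.norm_of_nonneg (by positivity), div_mul_eq_mul_div, one_mul,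
        div_le_iff₀ hk]
      push_cast at hxy
      linarith
    obtain ⟨u, hu, huz⟩ := hS z hz
    refine (ih x hx z hz hxz s hs u hu hsx huz).trans (hf u hu t ht ?_)
    calc ‖u - t‖ ≤ ‖u - y‖ + ‖y - t‖ := norm_sub_le_norm_sub_add_norm_sub u y t
      _ ≤ ‖u - z‖ + ‖z - y‖ + ‖y - t‖ := by gcongr; exact norm_sub_le_norm_sub_add_norm_sub u z y
      _ < 3 * ρ := by rw [norm_sub_rev y t]; linarith

section Rigidity

variable {E : Type*} [NormedAddCommGroup E] [NormedSpace ℝ E] {P : Set E} {φ : E → E}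
  {ε : ℝ≥0} {r ρ : ℝ}

lemma sub_eq_sub_of_image_sub_eq (hφ : ApproximatesLinearOn φ (ContinuousLinearMap.id ℝ E) univ ε)
    (hε : ε ≤ 1 / 2)
    (hgap : ∀ s ∈ (P - P) ∩ ball 0 (4 * r), ∀ t ∈ (P - P) ∩ ball 0 (4 * r),
      ‖s - t‖ ≤ 5 * r * ε → s = t)
    {p₁ p₂ q₁ q₂ : E} (hp₁ : p₁ ∈ P) (hp₂ : p₂ ∈ P) (hq₁ : q₁ ∈ P) (hq₂ : q₂ ∈ P)
    (hp : ‖p₁ - p₂‖ < r) (h : φ q₁ - φ q₂ = φ p₁ - φ p₂) : q₁ - q₂ = p₁ - p₂ := by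
  have hq : ‖q₁ - q₂‖ ≤ 4 * ‖p₁ - p₂‖ :=
    calc ‖q₁ - q₂‖ ≤ 2 * ‖φ q₁ - φ q₂‖ := hφ.norm_sub_le_two_mul_norm_image_sub hε q₁ q₂
      _ ≤ 2 * (2 * ‖p₁ - p₂‖) := by
        rw [h]; gcongr; exact hφ.norm_image_sub_le_two_mul (hε.trans (by norm_num)) p₁ p₂
      _ = 4 * ‖p₁ - p₂‖ := by ring
  refine hgap _ ⟨sub_mem_sub hq₁ hq₂, mem_ball_zero_iff.mpr (by linarith)⟩
    _ ⟨sub_mem_sub hp₁ hp₂, mem_ball_zero_iff.mpr (by linarith [norm_nonneg (p₁ - p₂)])⟩ ?_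
  calc ‖q₁ - q₂ - (p₁ - p₂)‖ = ‖(φ p₁ - φ p₂ - (p₁ - p₂)) - (φ q₁ - φ q₂ - (q₁ - q₂))‖ := by
        rw [h]; congr 1; abel
    _ ≤ ε * ‖p₁ - p₂‖ + ε * ‖q₁ - q₂‖ :=
        (norm_sub_le _ _).trans (add_le_add (hφ p₁ trivial p₂ trivial) (hφ q₁ trivial q₂ trivial))
    _ ≤ 5 * r * ε := by
        nlinarith [mul_le_mul_of_nonneg_left hq ε.coe_nonneg,
          mul_le_mul_of_nonneg_left hp.le ε.coe_nonneg]

lemma exists_forall_add_mem_of_image_sub_eq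
    (hφ : ApproximatesLinearOn φ (ContinuousLinearMap.id ℝ E) univ ε) (hε : ε ≤ 1 / 2)
    (hdense : ∀ x, ∃ p ∈ P, ‖p - x‖ < ρ)
    (hgap : ∀ s ∈ (P - P) ∩ ball 0 (4 * (3 * ρ)), ∀ t ∈ (P - P) ∩ ball 0 (4 * (3 * ρ)),
      ‖s - t‖ ≤ 5 * (3 * ρ) * ε → s = t)
    {a b : E} {M : ℝ} (hpartner : ∀ p ∈ P, ‖p - a‖ < M + ρ → ∃ q ∈ P, φ q - φ b = φ p - φ a) :
    ∃ c, ∀ p ∈ P, ‖p - a‖ < M → p + c ∈ P ∧ φ (p + c) - φ b = φ p - φ a := by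
  choose! g hgP hg using hpartner
  obtain ⟨p₀, hp₀, hp₀a⟩ := hdense a
  have hρ : 0 < ρ := (norm_nonneg _).trans_lt hp₀a
  set S := {p ∈ P | ‖p - a‖ < M + ρ}
  have hS : ∀ x ∈ ball a M, ∃ s ∈ S, ‖s - x‖ < ρ := by
    intro x hx
    obtain ⟨q, hq, hqx⟩ := hdense x
    refine ⟨q, ⟨hq, ?_⟩, hqx⟩
    calc ‖q - a‖ ≤ ‖q - x‖ + ‖x - a‖ := norm_sub_le_norm_sub_add_norm_sub q x a
      _ < M + ρ := by rw [mem_ball, dist_eq_norm] at hx; linarith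
  have hlocal : ∀ s ∈ S, ∀ t ∈ S, ‖s - t‖ < 3 * ρ → g s - s = g t - t := by
    rintro s ⟨hs, hsa⟩ t ⟨ht, hta⟩ hst
    refine sub_eq_sub_iff_sub_eq_sub.mp (sub_eq_sub_of_image_sub_eq hφ hε hgap hs ht
      (hgP s hs hsa) (hgP t ht hta) hst ?_)
    rw [← sub_sub_sub_cancel_right (φ (g s)) (φ (g t)) (φ b), hg s hs hsa, hg t ht hta,
      sub_sub_sub_cancel_right]
  refine ⟨g p₀ - p₀, fun p hp hpa => ?_⟩
  have hM : 0 < M := (norm_nonneg _).trans_lt hpa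
  have hshift : g p - p = g p₀ - p₀ :=
    (convex_ball a M).apply_eq_apply_of_dense hS hlocal (by rwa [mem_ball, dist_eq_norm])
      (mem_ball_self hM) ⟨hp, by linarith⟩ ⟨hp₀, by linarith⟩ (by simpa) hp₀a
  rw [show p + (g p₀ - p₀) = g p by rw [← hshift]; abel]
  exact ⟨hgP p hp (by linarith), hg p hp (by linarith)⟩

end Rigidity

section Reflection

variable {n : ℕ} {P : Set (Euc n)} {φ : Euc n → Euc n} {ε : ℝ≥0} {ρ : ℝ}

lemma exists_mem_image_sub_eq_of_patch_eq {S : ℝ} {u v p : Euc n}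
    (huv : patch (φ '' P) S (φ u) = patch (φ '' P) S (φ v)) (hp : p ∈ P)
    (hpu : ‖φ p - φ u‖ < S) : ∃ q ∈ P, φ q - φ v = φ p - φ u := by
  obtain ⟨q, hq, hqe⟩ := add_mem_of_patch_eq huv hpu
    (by rw [sub_add_cancel]; exact mem_image_of_mem φ hp)
  exact ⟨q, hq, by rw [hqe]; abel⟩

lemma patch_eq_patch_add_of_forall_add_mem {a b c : Euc n} {M δ : ℝ}
    (hab : ∀ p ∈ P, ‖p - a‖ < M → p + c ∈ P) (hba : ∀ q ∈ P, ‖q - b‖ < M → q - c ∈ P)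
    (hδ : ‖a + c - b‖ ≤ δ) : patch P (M - δ) a = patch P (M - δ) (a + c) := by
  refine patch_eq_patch_iff.mpr fun z hz => ⟨fun h => ?_, fun h => ?_⟩
  · rw [← add_assoc]
    exact hab _ h (by rw [add_sub_cancel_right]; linarith [(norm_nonneg _).trans hδ])
  · have := hba _ h (by rw [add_sub_assoc]; linarith [norm_add_le z (a + c - b)])
    rwa [← add_assoc, add_sub_cancel_right] at this

lemma exists_patch_eq_patch_add_of_image_patch_eq
    (hφ : ApproximatesLinearOn φ (ContinuousLinearMap.id ℝ (Euc n)) univ ε) (hε : ε ≤ 1 / 2)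
    (hdense : ∀ x, ∃ p ∈ P, ‖p - x‖ < ρ)
    (hgap : ∀ s ∈ (P - P) ∩ ball 0 (4 * (3 * ρ)), ∀ t ∈ (P - P) ∩ ball 0 (4 * (3 * ρ)),
      ‖s - t‖ ≤ 5 * (3 * ρ) * ε → s = t)
    {a b : Euc n} {M : ℝ} (hM : 7 * ρ ≤ M)
    (hab : patch (φ '' P) (2 * (M + ρ)) (φ a) = patch (φ '' P) (2 * (M + ρ)) (φ b)) :
    ∃ c, patch P (M - 5 * ρ) a = patch P (M - 5 * ρ) (a + c) ∧
      ∀ p ∈ P, ‖p - a‖ < M → φ (p + c) - φ b = φ p - φ a := by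
  have hinj := (hφ.bijective (hε.trans_lt (by norm_num))).1
  have hlip := hφ.norm_image_sub_le_two_mul (hε.trans (by norm_num))
  have hanti := hφ.norm_sub_le_two_mul_norm_image_sub hε
  have hpartner : ∀ {u v : Euc n},
      patch (φ '' P) (2 * (M + ρ)) (φ u) = patch (φ '' P) (2 * (M + ρ)) (φ v) →
      ∀ p ∈ P, ‖p - u‖ < M + ρ → ∃ q ∈ P, φ q - φ v = φ p - φ u := fun huv p hp hpu =>
    exists_mem_image_sub_eq_of_patch_eq huv hp ((hlip p _).trans_lt (by linarith))
  obtain ⟨c, hc⟩ := exists_forall_add_mem_of_image_sub_eq hφ hε hdense hgap (hpartner hab)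
  obtain ⟨c', hc'⟩ := exists_forall_add_mem_of_image_sub_eq hφ hε hdense hgap (hpartner hab.symm)
  obtain ⟨p₀, hp₀, hp₀a⟩ := hdense a
  obtain ⟨hp₀c, hφp₀c⟩ := hc p₀ hp₀ (by linarith [(norm_nonneg (p₀ - a)).trans_lt hp₀a])
  have hp₀cb : ‖p₀ + c - b‖ < 4 * ρ :=
    calc ‖p₀ + c - b‖ ≤ 2 * ‖φ (p₀ + c) - φ b‖ := hanti _ _
      _ ≤ 2 * (2 * ‖p₀ - a‖) := by rw [hφp₀c]; gcongr; exact hlip _ _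
      _ < 4 * ρ := by linarith
  have hc'c : c' = -c := by
    obtain ⟨-, h⟩ := hc' (p₀ + c) hp₀c (by linarith [(norm_nonneg (p₀ - a)).trans_lt hp₀a])
    have h' : p₀ + c + c' = p₀ := hinj (sub_left_inj.mp (h.trans hφp₀c))
    rw [add_assoc, add_eq_left] at h'
    exact eq_neg_of_add_eq_zero_right h'
  have hacb : ‖a + c - b‖ ≤ 5 * ρ :=
    calc ‖a + c - b‖ = ‖(p₀ + c - b) - (p₀ - a)‖ := by congr 1; abel
      _ ≤ 5 * ρ := by linarith [norm_sub_le (p₀ + c - b) (p₀ - a)]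
  refine ⟨c, patch_eq_patch_add_of_forall_add_mem (fun p hp hpa => (hc p hp hpa).1)
    (fun q hq hqb => by simpa [hc'c, ← sub_eq_add_neg] using (hc' q hq hqb).1) hacb,
    fun p hp hpa => (hc p hp hpa).2⟩

def ReflectsPatches (P : Set (Euc n)) (φ : Euc n → Euc n) : Prop :=
  ∀ r : ℝ, ∃ S > 0, ∀ a b : Euc n,
    patch (φ '' P) S (φ a) = patch (φ '' P) S (φ b) → patch P r a = patch P r b

lemma reflectsPatches_of_approximatesLinearOn {R : ℝ}
    (hφ : ApproximatesLinearOn φ (ContinuousLinearMap.id ℝ (Euc n)) univ ε) (hε : ε ≤ 1 / 2)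
    (hφd : Differentiable ℝ φ) (hφ' : EquivRange P R (fderiv ℝ φ))
    (hdense : ∀ x, ∃ p ∈ P, ‖p - x‖ < ρ)
    (hgap : ∀ s ∈ (P - P) ∩ ball 0 (4 * (3 * ρ)), ∀ t ∈ (P - P) ∩ ball 0 (4 * (3 * ρ)),
      ‖s - t‖ ≤ 5 * (3 * ρ) * ε → s = t) :
    ReflectsPatches P φ := by
  intro r
  obtain ⟨p, -, hp⟩ := hdense 0
  have hρ : 0 < ρ := (norm_nonneg _).trans_lt hp
  set M := |r| + |R| + 7 * ρ
  have hM : r ≤ M - 5 * ρ ∧ R + ρ ≤ M - 5 * ρ ∧ 7 * ρ ≤ M := by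
    refine ⟨?_, ?_, ?_⟩ <;> linarith [le_abs_self r, le_abs_self R, abs_nonneg r, abs_nonneg R]
  refine ⟨2 * (M + ρ), by positivity, fun a b hab => ?_⟩
  obtain ⟨c, hper, hc⟩ :=
    exists_patch_eq_patch_add_of_image_patch_eq hφ hε hdense hgap hM.2.2 hab
  obtain ⟨p₀, hp₀, hp₀a⟩ := hdense a
  -- `φ` has the same increments around `a` and `a + c`, and `φ (p₀ + c)` is `φ p₀ - φ a + φ b`
  have hb : a + c = b := by
    have h := apply_add_sub_eq_of_patch_eq hφd hφ' (patch_eq_of_le hper hM.2.1) hp₀a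
    rw [add_sub_cancel, show a + c + (p₀ - a) = p₀ + c by abel, ← hc p₀ hp₀ (by linarith)] at h
    exact (hφ.bijective (hε.trans_lt (by norm_num))).1 (sub_right_inj.mp h).symm
  rw [hb] at hper
  exact patch_eq_of_le hper hM.1

end Reflection

section Consequences

variable {n : ℕ} {P : Set (Euc n)} {φ : Euc n → Euc n}

lemma locallyDerivable_of_forall_mem_imp {Q : Set (Euc n)} {R : ℝ} (hR : 0 < R)
    (h : ∀ x y, patch P R x = patch P R y → x ∈ Q → y ∈ Q) : LocallyDerivable P Q := by
  refine ⟨R, hR, fun x y hxy => ?_⟩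
  ext z
  simp only [mem_inter_iff, mem_singleton_iff, mem_shiftSet]
  refine and_congr_right fun hz => ?_
  rw [hz, zero_add, zero_add]
  exact ⟨h x y hxy, h y x hxy.symm⟩

lemma ReflectsPatches.strongEquiv_comp_invFun {F : Type*} {f : Euc n → F}
    (h : ReflectsPatches P φ) (hφ : Function.Surjective φ) (hf : StrongEquiv P f) :
    StrongEquiv (φ '' P) (f ∘ Function.invFun φ) := by
  obtain ⟨R, -, hR⟩ := hf
  obtain ⟨S, hS, hPS⟩ := h R
  refine ⟨S, hS, fun u v huv => hR _ _ (hPS _ _ ?_)⟩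
  rwa [Function.rightInverse_invFun hφ u, Function.rightInverse_invFun hφ v]

/-- If `ψ p = φ a`, then `p` lies within bounded distance of `a`, since `φ - ψ` is bounded on `P`;
equivariance of `dψ` and of `φ - ψ` then shows that `ψ` maps `p + (b - a)` to `φ b`. -/
lemma ReflectsPatches.locallyDerivable_image {ψ : Euc n → Euc n} {K : ℝ≥0}
    (h : ReflectsPatches P φ) (hφ : Function.Surjective φ) (hφK : AntilipschitzWith K φ)
    (hFLC : FLC P) (hψ : Differentiable ℝ ψ) (hψ' : StrongEquiv P (fderiv ℝ ψ))
    (hd : StrongEquiv P (fun x => φ x - ψ x)) : LocallyDerivable (φ '' P) (ψ '' P) := by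
  obtain ⟨R₂, hR₂0, hR₂⟩ := hψ'
  obtain ⟨R₃, hR₃, hd⟩ := hd
  obtain ⟨B, hB⟩ := (hd.finite_image hFLC hR₃).isBounded.exists_norm_le
  obtain ⟨S, hS, hPS⟩ := h (max R₃ (R₂ + (K * B + 1)))
  refine locallyDerivable_of_forall_mem_imp hS ?_
  rintro x y hxy ⟨p, hp, rfl⟩
  set a := Function.invFun φ (ψ p)
  set b := Function.invFun φ y
  have ha : φ a = ψ p := Function.rightInverse_invFun hφ _
  have hb : φ b = y := Function.rightInverse_invFun hφ _
  have hab := hPS a b (by rwa [ha, hb])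
  have hpa : ‖p - a‖ < K * B + 1 := by
    have := hφK.le_mul_dist p a
    rw [dist_eq_norm, dist_eq_norm, ha] at this
    nlinarith [hB _ (mem_image_of_mem _ hp), K.coe_nonneg]
  have hincr := apply_add_sub_eq_of_patch_eq hψ hR₂ (patch_eq_of_le hab (le_max_right _ _)) hpa
  have hdab : φ a - ψ a = φ b - ψ b := hd a b (patch_eq_of_le hab (le_max_left _ _))
  have hpab : p - a + b ∈ P :=
    add_mem_of_patch_eq hab (hpa.trans_le (le_max_of_le_right (by linarith))) (by simpa)
  refine ⟨p - a + b, hpab, ?_⟩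
  rw [add_sub_cancel, add_comm b, eq_sub_iff_add_eq] at hincr
  rw [← hincr, ← ha, hdab, sub_add_cancel, hb]

end Consequences

lemma exists_reflectsPatches {n : ℕ} {P : Set (Euc n)} (hUD : UnifDiscrete P) (hRD : RelDense P)
    (hFLC : FLC P) :
    ∃ ε : ℝ≥0, 0 < ε ∧ ε ≤ 1 / 2 ∧ ∀ (φ : Euc n → Euc n) (R : ℝ),
      ApproximatesLinearOn φ (ContinuousLinearMap.id ℝ (Euc n)) univ ε →
      Differentiable ℝ φ → EquivRange P R (fderiv ℝ φ) → ReflectsPatches P φ := by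
  obtain ⟨ρ, hρ, hdense⟩ := hRD
  obtain ⟨γ, hγ, hgap⟩ := (hFLC.finite_sub_inter_ball hUD (r := 4 * (3 * ρ))
    (by positivity)).exists_pos_forall_eq_of_norm_sub_lt
  let ε : ℝ≥0 := ⟨min (1 / 2) (γ / (30 * ρ)), by positivity⟩
  have hε : ε ≤ 1 / 2 := by
    have : (ε : ℝ) ≤ 1 / 2 := min_le_left (1 / 2 : ℝ) _
    exact_mod_cast this
  have hεγ : 5 * (3 * ρ) * ε < γ := by
    have : (ε : ℝ) ≤ γ / (30 * ρ) := min_le_right (1 / 2 : ℝ) _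
    rw [le_div_iff₀ (by positivity)] at this
    linarith
  refine ⟨ε, ?_, hε, fun φ R hφ hφd hφ' => reflectsPatches_of_approximatesLinearOn hφ hε hφd hφ'
    hdense fun s hs t ht hst => hgap s hs t ht (hst.trans_lt hεγ)⟩
  rw [← NNReal.coe_pos]
  exact lt_min (by norm_num) (by positivity)

theorem stmt19 {n : ℕ} (P : Set (Euc n))
    (hUD : UnifDiscrete P) (hRD : RelDense P) (hFLC : FLC P) :
    ∃ ε : ℝ, 0 < ε ∧ ε < 1 ∧
      ∀ φ ψ : Euc n → Euc n, Differentiable ℝ φ → Differentiable ℝ ψ →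
      StrongEquiv P (fderiv ℝ φ) → StrongEquiv P (fderiv ℝ ψ) →
      (∀ x : Euc n, ‖fderiv ℝ φ x - ContinuousLinearMap.id ℝ (Euc n)‖ < ε) →
      StrongEquiv P (fun x => φ x - ψ x) →
      Function.Bijective φ ∧
        StrongEquiv (φ '' P)
          (fun u => ψ (Function.invFun φ u) - φ (Function.invFun φ u)) ∧
        LocallyDerivable (φ '' P) (ψ '' P) := by
  obtain ⟨ε, hε0, hε, hreflect⟩ := exists_reflectsPatches hUD hRD hFLC
  have hε' : (ε : ℝ) ≤ 1 / 2 := by exact_mod_cast hε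
  refine ⟨ε, hε0, by linarith, fun φ ψ hφ hψ hφ' hψ' hφI hd => ?_⟩
  have happrox := approximatesLinearOn_id_of_norm_fderiv_sub_le hφ fun x => (hφI x).le
  have hbij := happrox.bijective (hε.trans_lt (by norm_num))
  have hanti : AntilipschitzWith 2 φ := .of_le_mul_dist fun x y => by
    simpa [dist_eq_norm] using happrox.norm_sub_le_two_mul_norm_image_sub hε x y
  obtain ⟨R, -, hR⟩ := hφ'
  have hrefl := hreflect φ R happrox hφ hR
  have hd' : StrongEquiv P (fun x => ψ x - φ x) := by
    obtain ⟨R₃, hR₃, hd⟩ := hd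
    exact ⟨R₃, hR₃, fun x y hxy => by simpa using congrArg Neg.neg (hd x y hxy)⟩
  exact ⟨hbij, hrefl.strongEquiv_comp_invFun hbij.2 hd',
    hrefl.locallyDerivable_image hbij.2 hanti hFLC hψ hψ' hd⟩
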